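/- arXiv:2106.04432 — 4 statements merged into one kernel-verified Lean document; each statement's English description precedes it below -/
import Mathlib

section
/- For every lattice Λ, the dual polytope of its Voronoi cell satisfies VC(Λ)° = conv{ (2/‖z‖²)·z : z ∈ Λ \ {0} } (the convex hull being taken of this set, which has only finitely many extreme points). -/
/-!
`⊇`: `x ∈ VC(Λ)` says `⟪x, z⟫ ≤ ‖z‖² / 2` for every `z ∈ Λ`, i.e. `⟪x, (2 / ‖z‖²) • z⟫ ≤ 1`, and the
polar is convex.

`⊆`: the points `(2 / ‖z‖²) • z` have norm `2 / ‖z‖`, so by discreteness of `Λ` they accumulate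
only at `0`, which lies in their convex hull as the midpoint of the points for `z` and `-z`. Hence
that hull is compact (Carathéodory).
A point of `VC(Λ)°` outside the hull would be strictly separated from it by a hyperplane
`⟪v, ·⟫ = 1`; the projection of `v` onto `lin(Λ)` then lies in `VC(Λ)` but pairs with that point
to more than `1`.
-/

open scoped RealInnerProductSpace

/-- A lattice in a real inner product space: the image of `ℤ^k` under an injective
linear map, i.e. the set of integer combinations of linearly independent vectors. -/
def IsLattice {E : Type*} [NormedAddCommGroup E] [InnerProductSpace ℝ E] (Λ : Set E) : Prop :=
  ∃ (k : ℕ) (b : Fin k → E), LinearIndependent ℝ b ∧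
    Λ = {x | ∃ z : Fin k → ℤ, x = ∑ i, (z i : ℝ) • b i}

/-- The Voronoi cell of a lattice `Λ`:
`{x ∈ lin(Λ) : ‖x‖ ≤ ‖x − z‖ for all z ∈ Λ}`. -/
def VorCell {E : Type*} [NormedAddCommGroup E] [InnerProductSpace ℝ E] (Λ : Set E) : Set E :=
  {x | x ∈ Submodule.span ℝ Λ ∧ ∀ z ∈ Λ, ‖x‖ ≤ ‖x - z‖}

/-- The dual polytope of the Voronoi cell of `Λ`, taken within `lin(Λ)`:
`{y ∈ lin(Λ) : ⟨x,y⟩ ≤ 1 for all x ∈ VC(Λ)}`. -/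
def dualVorCell {E : Type*} [NormedAddCommGroup E] [InnerProductSpace ℝ E]
    (Λ : Set E) : Set E :=
  {y | y ∈ Submodule.span ℝ Λ ∧ ∀ x ∈ VorCell Λ, ⟪x, y⟫ ≤ 1}

open Set Metric Filter Module Topology

theorem Fin.sum_smul_mem_image_stdSimplex {E : Type*} [AddCommMonoid E] [Module ℝ E]
    {s : Set E} {p : E} (hp : p ∈ s) {m n : ℕ} (hmn : m ≤ n) {w : Fin m → ℝ}
    (hw : w ∈ stdSimplex ℝ (Fin m)) {z : Fin m → E} (hz : ∀ i, z i ∈ s) :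
    ∑ i, w i • z i ∈ (fun q : (Fin n → ℝ) × (Fin n → E) ↦ ∑ i, q.1 i • q.2 i) ''
      (stdSimplex ℝ (Fin n) ×ˢ univ.pi fun _ ↦ s) := by
  obtain ⟨k, rfl⟩ := Nat.exists_eq_add_of_le hmn
  refine ⟨(Fin.append w 0, Fin.append z fun _ ↦ p), ⟨⟨fun i ↦ ?_, ?_⟩, fun i _ ↦ ?_⟩, ?_⟩
  · exact Fin.addCases (fun i ↦ by simpa using hw.1 i) (fun i ↦ by simp) i
  · simpa [Fin.sum_univ_add] using hw.2
  · exact Fin.addCases (fun i ↦ by simpa using hz i) (fun i ↦ by simpa using hp) i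
  · simp [Fin.sum_univ_add]

theorem IsCompact.convexHull {E : Type*} [NormedAddCommGroup E] [NormedSpace ℝ E]
    [FiniteDimensional ℝ E] {s : Set E} (hs : IsCompact s) : IsCompact (convexHull ℝ s) := by
  rcases s.eq_empty_or_nonempty with rfl | ⟨p, hp⟩
  · simp
  let N := finrank ℝ E + 1
  suffices _root_.convexHull ℝ s = (fun q : (Fin N → ℝ) × (Fin N → E) ↦ ∑ i, q.1 i • q.2 i) ''
      (stdSimplex ℝ (Fin N) ×ˢ univ.pi fun _ ↦ s) by
    rw [this]
    exact ((isCompact_stdSimplex _ _).prod (isCompact_univ_pi fun _ ↦ hs)).image (by fun_prop)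
  refine subset_antisymm (fun x hx ↦ ?_) ?_
  · obtain ⟨ι, _, z, w, hzs, hz, hw0, hw1, rfl⟩ := eq_pos_convex_span_of_mem_convexHull hx
    let e := (Fintype.equivFin ι).symm
    rw [← e.sum_comp]
    refine Fin.sum_smul_mem_image_stdSimplex hp ?_ ⟨fun i ↦ (hw0 _).le, ?_⟩ fun i ↦ hzs ⟨_, rfl⟩
    · exact hz.card_le_finrank_succ.trans (by simp [N, Submodule.finrank_le])
    · simpa [e.sum_comp] using hw1
  · rintro _ ⟨⟨w, z⟩, ⟨⟨hw0, hw1⟩, hz⟩, rfl⟩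
    exact mem_convexHull_of_exists_fintype w z hw0 hw1 (fun i ↦ hz i trivial) rfl

variable {E : Type*} [NormedAddCommGroup E] [InnerProductSpace ℝ E]

theorem IsLattice.finite_inter_closedBall [FiniteDimensional ℝ E] {Λ : Set E}
    (hΛ : IsLattice Λ) (R : ℝ) : (Λ ∩ closedBall 0 R).Finite := by
  obtain ⟨k, b, hb, rfl⟩ := hΛ
  obtain ⟨C, -, hC⟩ := (Fintype.linearCombination ℝ b).exists_antilipschitzWith
    (LinearMap.ker_eq_bot.mpr hb.fintypeLinearCombination_injective)
  have hcoef : (closedBall (0 : Fin k → ℤ) (C * R)).Finite :=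
    (isCompact_closedBall _ _).finite_of_discrete
  refine (hcoef.image fun z ↦ ∑ i, (z i : ℝ) • b i).subset ?_
  rintro _ ⟨⟨z, rfl⟩, hzR⟩
  refine ⟨z, mem_closedBall_zero_iff.mpr ?_, rfl⟩
  have hz := hC.le_mul_norm_sub 0 fun i ↦ (z i : ℝ)
  simp only [neg_zero, zero_add, map_zero, Fintype.linearCombination_apply] at hz
  have hcast : ‖z‖ ≤ ‖fun i ↦ (z i : ℝ)‖ := (pi_norm_le_iff_of_nonneg (norm_nonneg _)).mpr
    fun i ↦ Int.norm_cast_real (z i) ▸ norm_le_pi_norm (fun i ↦ (z i : ℝ)) i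
  calc ‖z‖ ≤ C * ‖∑ i, (z i : ℝ) • b i‖ := hcast.trans hz
    _ ≤ C * R := by gcongr; exact mem_closedBall_zero_iff.mp hzR

theorem IsLattice.neg_mem {Λ : Set E} (hΛ : IsLattice Λ) {z : E} (hz : z ∈ Λ) : -z ∈ Λ := by
  obtain ⟨k, b, -, rfl⟩ := hΛ
  obtain ⟨c, rfl⟩ := hz
  exact ⟨-c, by simp [Finset.sum_neg_distrib]⟩

theorem IsLattice.exists_ne_zero {Λ : Set E} (hΛ : IsLattice Λ) (hne : Λ ≠ {0}) :
    ∃ z ∈ Λ, z ≠ 0 := by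
  obtain ⟨k, b, -, rfl⟩ := hΛ
  by_contra! h
  exact hne (eq_singleton_iff_unique_mem.mpr ⟨⟨0, by simp⟩, h⟩)

theorem norm_le_norm_sub_iff_inner_le (x z : E) : ‖x‖ ≤ ‖x - z‖ ↔ ⟪x, z⟫ ≤ ‖z‖ ^ 2 / 2 := by
  rw [← sq_le_sq₀ (norm_nonneg _) (norm_nonneg _), norm_sub_sq_real]
  constructor <;> intro h <;> linarith

theorem mem_vorCell_iff {Λ : Set E} {x : E} :
    x ∈ VorCell Λ ↔ x ∈ Submodule.span ℝ Λ ∧ ∀ z ∈ Λ, ⟪x, z⟫ ≤ ‖z‖ ^ 2 / 2 :=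
  and_congr_right fun _ ↦ forall₂_congr fun z _ ↦ norm_le_norm_sub_iff_inner_le x z

theorem convex_dualVorCell (Λ : Set E) : Convex ℝ (dualVorCell Λ) := by
  rintro y₁ ⟨hy₁, h₁⟩ y₂ ⟨hy₂, h₂⟩ a b ha hb hab
  refine ⟨add_mem (Submodule.smul_mem _ a hy₁) (Submodule.smul_mem _ b hy₂), fun x hx ↦ ?_⟩
  rw [inner_add_right, real_inner_smul_right, real_inner_smul_right]
  nlinarith [h₁ x hx, h₂ x hx]

/-- The inversions `(2 / ‖z‖²) • z` of the nonzero lattice vectors in the sphere of radius `√2`. -/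
def invertedLattice (Λ : Set E) : Set E :=
  {w | ∃ z ∈ Λ, z ≠ 0 ∧ w = (2 / ‖z‖ ^ 2) • z}

theorem inner_two_div_norm_sq_smul_le_one_iff (x : E) {z : E} (hz : z ≠ 0) :
    ⟪x, (2 / ‖z‖ ^ 2) • z⟫ ≤ 1 ↔ ⟪x, z⟫ ≤ ‖z‖ ^ 2 / 2 := by
  have : 0 < ‖z‖ ^ 2 := by positivity
  rw [real_inner_smul_right, div_mul_eq_mul_div, div_le_one this]
  constructor <;> intro h <;> linarith

theorem norm_two_div_norm_sq_smul {z : E} (hz : z ≠ 0) : ‖(2 / ‖z‖ ^ 2) • z‖ = 2 / ‖z‖ := by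
  have : ‖z‖ ≠ 0 := norm_ne_zero_iff.mpr hz
  rw [norm_smul, Real.norm_eq_abs, abs_of_pos (by positivity)]
  field_simp

theorem invertedLattice_subset_dualVorCell (Λ : Set E) : invertedLattice Λ ⊆ dualVorCell Λ := by
  rintro _ ⟨z, hz, hz0, rfl⟩
  refine ⟨Submodule.smul_mem _ _ (Submodule.subset_span hz), fun x hx ↦ ?_⟩
  exact (inner_two_div_norm_sq_smul_le_one_iff x hz0).mpr ((mem_vorCell_iff.mp hx).2 z hz)

theorem IsLattice.zero_mem_convexHull_invertedLattice {Λ : Set E} (hΛ : IsLattice Λ)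
    (hne : Λ ≠ {0}) : (0 : E) ∈ convexHull ℝ (invertedLattice Λ) := by
  obtain ⟨z, hz, hz0⟩ := hΛ.exists_ne_zero hne
  have hw : (2 / ‖z‖ ^ 2) • z ∈ invertedLattice Λ := ⟨z, hz, hz0, rfl⟩
  have hw' : -((2 / ‖z‖ ^ 2) • z) ∈ invertedLattice Λ :=
    ⟨-z, hΛ.neg_mem hz, neg_ne_zero.mpr hz0, by rw [norm_neg, smul_neg]⟩
  simpa using convex_convexHull ℝ _ (subset_convexHull ℝ _ hw) (subset_convexHull ℝ _ hw')
    (by norm_num : (0 : ℝ) ≤ 1 / 2) (by norm_num : (0 : ℝ) ≤ 1 / 2) (add_halves 1)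

theorem IsLattice.isCompact_insert_zero_invertedLattice [FiniteDimensional ℝ E] {Λ : Set E}
    (hΛ : IsLattice Λ) : IsCompact (insert 0 (invertedLattice Λ)) := by
  let inv : ↥(Λ \ {0}) → E := fun z ↦ (2 / ‖(z : E)‖ ^ 2) • (z : E)
  have hinv : Tendsto inv cofinite (𝓝 0) := by
    refine Metric.tendsto_nhds.mpr fun ε hε ↦ eventually_cofinite.mpr ?_
    refine ((hΛ.finite_inter_closedBall (2 / ε)).preimage Subtype.val_injective.injOn).subset ?_
    rintro ⟨z, hz, hz0⟩ hzε
    refine ⟨hz, mem_closedBall_zero_iff.mpr ?_⟩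
    simp only [mem_ofPred_eq, dist_zero_right, not_lt, inv, norm_two_div_norm_sq_smul hz0] at hzε
    rw [le_div_iff₀ (norm_pos_iff.mpr hz0)] at hzε
    rw [le_div_iff₀ hε]
    linarith
  convert hinv.isCompact_insert_range_of_cofinite using 2
  ext w
  simp [invertedLattice, inv, eq_comm, and_assoc]

theorem dualVorCell_subset_of_isClosed [FiniteDimensional ℝ E] {Λ C : Set E}
    (hC : Convex ℝ C) (hCc : IsClosed C) (hC0 : 0 ∈ C) (hΛC : invertedLattice Λ ⊆ C) :
    dualVorCell Λ ⊆ C := by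
  rintro y ⟨hyL, hy⟩
  by_contra hyC
  obtain ⟨f, u, hfC, hfy⟩ := geometric_hahn_banach_closed_point hC hCc hyC
  have hu : 0 < u := by simpa using hfC 0 hC0
  set L := Submodule.span ℝ Λ
  set x := L.starProjection (u⁻¹ • (InnerProductSpace.toDual ℝ E).symm f)
  have hx : ∀ z ∈ L, ⟪x, z⟫ = f z / u := fun z hz ↦ by
    rw [L.inner_starProjection_left_eq_right, L.starProjection_eq_self_iff.mpr hz,
      real_inner_smul_left, InnerProductSpace.toDual_symm_apply, inv_mul_eq_div]
  have hxV : x ∈ VorCell Λ := by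
    refine mem_vorCell_iff.mpr ⟨L.starProjection_apply_mem _, fun z hz ↦ ?_⟩
    rcases eq_or_ne z 0 with rfl | hz0
    · simp
    have hw : (2 / ‖z‖ ^ 2) • z ∈ L := L.smul_mem _ (Submodule.subset_span hz)
    rw [← inner_two_div_norm_sq_smul_le_one_iff x hz0, hx _ hw, div_le_one hu]
    exact (hfC _ (hΛC ⟨z, hz, hz0, rfl⟩)).le
  have := hy x hxV
  rw [hx y hyL, div_le_one hu] at this
  linarith

theorem IsLattice.isCompact_convexHull_invertedLattice [FiniteDimensional ℝ E] {Λ : Set E}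
    (hΛ : IsLattice Λ) (hne : Λ ≠ {0}) : IsCompact (convexHull ℝ (invertedLattice Λ)) := by
  have hhull : convexHull ℝ (insert 0 (invertedLattice Λ)) = convexHull ℝ (invertedLattice Λ) :=
    (convexHull_min (insert_subset (hΛ.zero_mem_convexHull_invertedLattice hne)
      (subset_convexHull ℝ _)) (convex_convexHull ℝ _)).antisymm
      (convexHull_mono (subset_insert _ _))
  exact hhull ▸ hΛ.isCompact_insert_zero_invertedLattice.convexHull

/-- For every (nontrivial) lattice `Λ`, the dual polytope of the Voronoi cell is
`VC(Λ)° = conv{ (2/‖z‖²)·z : z ∈ Λ \ {0} }`. -/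
theorem dual_voronoi_cell_eq (d : ℕ) (Λ : Set (EuclideanSpace ℝ (Fin d)))
    (hΛ : IsLattice Λ) (hne : Λ ≠ {0}) :
    dualVorCell Λ =
      convexHull ℝ {w : EuclideanSpace ℝ (Fin d) |
        ∃ z ∈ Λ, z ≠ 0 ∧ w = (2 / ‖z‖ ^ 2) • z} := by
  refine subset_antisymm ?_
    (convexHull_min (invertedLattice_subset_dualVorCell Λ) (convex_dualVorCell Λ))
  exact dualVorCell_subset_of_isClosed (convex_convexHull ℝ _)
    (hΛ.isCompact_convexHull_invertedLattice hne).isClosed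
    (hΛ.zero_mem_convexHull_invertedLattice hne) (subset_convexHull ℝ _)
end

section
/- The dual polytope of the Voronoi cell of the root lattice A_d equals S + (−S), where S = conv{e_1,…,e_{d+1}} is the standard simplex, i.e., VC(A_d)° = {x − y : x, y ∈ S} within the hyperplane {x : Σ x_i = 0}. Consequently xc(VC(A_d)) ≤ 2(d+1). -/
open scoped RealInnerProductSpace

/-- A polytope: the convex hull of finitely many points. -/
def IsPolytope {E : Type*} [AddCommGroup E] [Module ℝ E] (P : Set E) : Prop :=
  ∃ s : Finset E, P = convexHull ℝ (s : Set E)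

/-- The extension complexity of `P`: the minimal number of (facet-defining)
inequalities of a polytope (a bounded polyhedron, in any dimension) that linearly
projects onto `P`. -/
noncomputable def xc {E : Type*} [AddCommGroup E] [Module ℝ E] (P : Set E) : ℕ :=
  sInf {m | ∃ (n : ℕ) (A : Fin m → Fin n → ℝ) (b : Fin m → ℝ)
      (π : (Fin n → ℝ) →ₗ[ℝ] E),
      Bornology.IsBounded {x : Fin n → ℝ | ∀ i, ∑ j, A i j * x j ≤ b i} ∧
      π '' {x : Fin n → ℝ | ∀ i, ∑ j, A i j * x j ≤ b i} = P}

open scoped Pointwise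

/-- The root lattice `A_d = {x ∈ ℤ^{d+1} : Σ_i x(i) = 0}`. -/
def rootLatticeA (d : ℕ) : Set (EuclideanSpace ℝ (Fin (d + 1))) :=
  {x | (∀ i, ∃ z : ℤ, x i = (z : ℝ)) ∧ ∑ i, x i = 0}

/-- The Voronoi cell of `A_d` (within its linear hull, the hyperplane `Σ x_i = 0`). -/
def vorCellA (d : ℕ) : Set (EuclideanSpace ℝ (Fin (d + 1))) :=
  {x | (∑ i, x i = 0) ∧ ∀ z ∈ rootLatticeA d, ‖x‖ ≤ ‖x - z‖}

/-- The standard simplex `S = conv{e_1, …, e_{d+1}}`. -/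
def stdSimplex' (d : ℕ) : Set (EuclideanSpace ℝ (Fin (d + 1))) :=
  convexHull ℝ (Set.range fun i => EuclideanSpace.single i (1 : ℝ))

/-!
In coordinates, `VC(A_d) = {x : Σ x = 0, x i - x j ≤ 1}`: the inequalities come from the roots
`e_i - e_j`, and conversely `⟪x, z⟫ ≤ Σ z⁺ ≤ ‖z‖² / 2` for every integer `z` with `Σ z = 0`.
Both the polar of this set and `S - S` equal `{w : Σ w = 0, Σ w⁺ ≤ 1}`. A point `w` of the latter
is `(w⁺ + c) - (w⁻ + c)` for a constant `c ≥ 0`, and testing `w` against the centred indicator of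
`{w > 0}` shows that `Σ w⁺ ≤ 1` is necessary. Finally `VC(A_d)` is the image of the cube
`[0, 1]^{d+1}`, which has `2 (d + 1)` facets, under subtraction of the mean.
-/

section

variable {ι : Type*} [Fintype ι]

lemma sum_posPart_eq_sum_negPart {w : ι → ℝ} (hw : ∑ i, w i = 0) :
    ∑ i, (w i)⁺ = ∑ i, (w i)⁻ := by
  rw [← sub_eq_zero, ← Finset.sum_sub_distrib]
  simpa only [posPart_sub_negPart] using hw

lemma mul_le_negPart {s a : ℝ} (hs₁ : -1 ≤ s) (hs₀ : s ≤ 0) : s * a ≤ a⁻ := by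
  rcases le_total 0 a with ha | ha
  · rw [negPart_eq_zero.2 ha]; nlinarith
  · rw [negPart_eq_neg.2 ha]; nlinarith

lemma sum_mul_le_sum_posPart [Nonempty ι] {x w : ι → ℝ} (hx : ∀ i j, x i - x j ≤ 1)
    (hw : ∑ i, w i = 0) : ∑ i, x i * w i ≤ ∑ i, (w i)⁺ := by
  obtain ⟨m, hm⟩ := Finite.exists_max x
  calc ∑ i, x i * w i = ∑ i, (x i - x m) * w i := by
        simp only [sub_mul, Finset.sum_sub_distrib, ← Finset.mul_sum, hw, mul_zero, sub_zero]
    _ ≤ ∑ i, (w i)⁻ :=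
        Finset.sum_le_sum fun i _ => mul_le_negPart (by linarith [hx m i]) (by linarith [hm i])
    _ = ∑ i, (w i)⁺ := (sum_posPart_eq_sum_negPart hw).symm

lemma two_mul_sum_posPart_le_sum_sq {z : ι → ℝ} (hz : ∀ i, ∃ n : ℤ, z i = n)
    (hsum : ∑ i, z i = 0) : 2 * ∑ i, (z i)⁺ ≤ ∑ i, z i ^ 2 := by
  have abs_le_sq (i : ι) : |z i| ≤ z i ^ 2 := by
    obtain ⟨n, hn⟩ := hz i
    rw [hn]
    exact_mod_cast (Int.natCast_natAbs n ▸ Int.natAbs_le_self_sq n)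
  calc 2 * ∑ i, (z i)⁺ = ∑ i, ((z i)⁺ + (z i)⁻) := by
        rw [Finset.sum_add_distrib, ← sum_posPart_eq_sum_negPart hsum, two_mul]
    _ = ∑ i, |z i| := by simp only [posPart_add_negPart]
    _ ≤ ∑ i, z i ^ 2 := Finset.sum_le_sum fun i _ => abs_le_sq i

lemma sub_stdSimplex_eq [Nonempty ι] :
    stdSimplex ℝ ι - stdSimplex ℝ ι = {w | ∑ i, w i = 0 ∧ ∑ i, (w i)⁺ ≤ 1} := by
  ext w
  constructor
  · rintro ⟨p, ⟨hp₀, hp₁⟩, q, ⟨hq₀, hq₁⟩, rfl⟩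
    refine ⟨by simp [Finset.sum_sub_distrib, hp₁, hq₁], ?_⟩
    calc ∑ i, (p i - q i)⁺ ≤ ∑ i, p i :=
          Finset.sum_le_sum fun i _ => sup_le (by linarith [hq₀ i]) (hp₀ i)
      _ = 1 := hp₁
  · rintro ⟨hw, hk⟩
    set c := (1 - ∑ i, (w i)⁺) / Fintype.card ι
    have hc : 0 ≤ c := div_nonneg (by linarith) (Nat.cast_nonneg _)
    have hsum_c : ∑ _i : ι, c = 1 - ∑ i, (w i)⁺ := by
      simp only [Finset.sum_const, Finset.card_univ, nsmul_eq_mul, c]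
      field_simp
    refine ⟨fun i => (w i)⁺ + c, ⟨fun i => add_nonneg (posPart_nonneg _) hc, ?_⟩,
      fun i => (w i)⁻ + c, ⟨fun i => add_nonneg (negPart_nonneg _) hc, ?_⟩, ?_⟩
    · rw [Finset.sum_add_distrib, hsum_c]; ring
    · rw [Finset.sum_add_distrib, hsum_c, ← sum_posPart_eq_sum_negPart hw]; ring
    · ext i; simp [posPart_sub_negPart]

/-- `VC(A_ι)` in facet form, on `ι → ℝ` rather than on the Euclidean space. -/
def voronoiA (ι : Type*) [Fintype ι] : Set (ι → ℝ) :=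
  {x | ∑ i, x i = 0 ∧ ∀ i j, x i - x j ≤ 1}

noncomputable def centering : (ι → ℝ) →ₗ[ℝ] ι → ℝ where
  toFun x i := x i - (∑ j, x j) / Fintype.card ι
  map_add' x y := by
    ext i
    simp only [Pi.add_apply, Finset.sum_add_distrib]
    ring
  map_smul' a x := by
    ext i
    simp only [Pi.smul_apply, smul_eq_mul, ← Finset.mul_sum, RingHom.id_apply]
    ring

lemma centering_apply (x : ι → ℝ) (i : ι) :
    centering x i = x i - (∑ j, x j) / Fintype.card ι := rfl

lemma sum_centering [Nonempty ι] (x : ι → ℝ) : ∑ i, centering x i = 0 := by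
  simp only [centering_apply, Finset.sum_sub_distrib, Finset.sum_const, Finset.card_univ,
    nsmul_eq_mul]
  field_simp
  ring

lemma centering_of_sum_eq_zero {x : ι → ℝ} (hx : ∑ i, x i = 0) : centering x = x := by
  ext i
  simp [centering_apply, hx]

lemma centering_sub_const [Nonempty ι] (x : ι → ℝ) (c : ℝ) :
    centering (fun i => x i - c) = centering x := by
  ext i
  simp only [centering_apply, Finset.sum_sub_distrib, Finset.sum_const, Finset.card_univ,
    nsmul_eq_mul]
  field_simp
  ring

lemma sum_centering_mul {y : ι → ℝ} (hy : ∑ i, y i = 0) (x : ι → ℝ) :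
    ∑ i, centering x i * y i = ∑ i, x i * y i := by
  simp [centering_apply, sub_mul, Finset.sum_sub_distrib, ← Finset.mul_sum, hy]

lemma image_centering_Icc [Nonempty ι] : centering '' Set.Icc 0 1 = voronoiA ι := by
  ext y
  constructor
  · rintro ⟨x, ⟨hx₀, hx₁⟩, rfl⟩
    refine ⟨sum_centering x, fun i j => ?_⟩
    simp only [centering_apply]
    linarith [show x i ≤ 1 from hx₁ i, show 0 ≤ x j from hx₀ j]
  · rintro ⟨hy, hy₁⟩
    obtain ⟨m, hm⟩ := Finite.exists_min y
    refine ⟨fun i => y i - y m, ⟨fun i => ?_, fun i => ?_⟩, ?_⟩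
    · simp [hm i]
    · simpa using hy₁ i m
    · rw [centering_sub_const, centering_of_sum_eq_zero hy]

lemma dual_voronoiA_eq [Nonempty ι] :
    {y : ι → ℝ | ∑ i, y i = 0 ∧ ∀ x ∈ voronoiA ι, ∑ i, x i * y i ≤ 1} =
      {w | ∑ i, w i = 0 ∧ ∑ i, (w i)⁺ ≤ 1} := by
  ext y
  refine and_congr_right fun hy => ⟨fun hdual => ?_, fun hk x hx => ?_⟩
  · let x : ι → ℝ := fun i => if 0 < y i then 1 else 0
    have hx : x ∈ Set.Icc 0 1 := ⟨fun i => by unfold x; split_ifs <;> norm_num,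
      fun i => by unfold x; split_ifs <;> norm_num⟩
    have hxy : ∑ i, x i * y i = ∑ i, (y i)⁺ := by
      simp only [x, posPart_eq_ite_lt, ite_mul, one_mul, zero_mul]
    have := hdual (centering x) (image_centering_Icc (ι := ι) ▸ Set.mem_image_of_mem _ hx)
    rwa [sum_centering_mul hy, hxy] at this
  · exact (sum_mul_le_sum_posPart hx.2 hy).trans hk

end

lemma WithLp.image_toLp_eq_preimage_ofLp {p : ENNReal} {V : Type*} (S : Set V) :
    WithLp.toLp p '' S = WithLp.ofLp ⁻¹' S :=
  (WithLp.equiv p V).symm.image_eq_preimage_symm S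

lemma EuclideanSpace.real_inner_eq_sum {ι : Type*} [Fintype ι] (x y : EuclideanSpace ℝ ι) :
    ⟪x, y⟫ = ∑ i, x i * y i := by
  simp [PiLp.inner_apply, mul_comm]

lemma norm_le_norm_sub_iff_two_mul_inner_le {F : Type*} [NormedAddCommGroup F]
    [InnerProductSpace ℝ F] (x z : F) : ‖x‖ ≤ ‖x - z‖ ↔ 2 * ⟪x, z⟫ ≤ ‖z‖ ^ 2 := by
  rw [← sq_le_sq₀ (norm_nonneg _) (norm_nonneg _), norm_sub_sq_real]
  constructor <;> intro h <;> linarith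

lemma norm_single_sub_single_sq {ι : Type*} [Fintype ι] [DecidableEq ι] {i j : ι} (hij : i ≠ j) :
    ‖EuclideanSpace.single i (1 : ℝ) - EuclideanSpace.single j 1‖ ^ 2 = 2 := by
  rw [norm_sub_sq_real]
  simp [EuclideanSpace.inner_single_left, hij.symm]
  norm_num

lemma single_sub_single_mem_rootLatticeA {d : ℕ} (i j : Fin (d + 1)) :
    EuclideanSpace.single i (1 : ℝ) - EuclideanSpace.single j 1 ∈ rootLatticeA d := by
  refine ⟨fun k => ⟨(Pi.single i 1 - Pi.single j 1 : Fin (d + 1) → ℤ) k, ?_⟩, ?_⟩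
  · simp [Pi.single_apply]
  · simp

lemma vorCellA_eq (d : ℕ) : vorCellA d = WithLp.ofLp ⁻¹' voronoiA (Fin (d + 1)) := by
  ext x
  refine and_congr_right fun hx => ⟨fun hz i j => ?_, fun hx₁ z ⟨hz, hz₀⟩ => ?_⟩
  · rcases eq_or_ne i j with rfl | hij
    · simp
    have := (norm_le_norm_sub_iff_two_mul_inner_le _ _).1
      (hz _ (single_sub_single_mem_rootLatticeA i j))
    rw [norm_single_sub_single_sq hij] at this
    simp [inner_sub_right, EuclideanSpace.inner_single_right] at this
    linarith
  · rw [norm_le_norm_sub_iff_two_mul_inner_le, EuclideanSpace.real_inner_eq_sum,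
      EuclideanSpace.real_norm_sq_eq]
    linarith [sum_mul_le_sum_posPart hx₁ hz₀, two_mul_sum_posPart_le_sum_sq hz hz₀]

lemma stdSimplex'_eq (d : ℕ) : stdSimplex' d = WithLp.toLp 2 '' stdSimplex ℝ (Fin (d + 1)) := by
  let e := (WithLp.linearEquiv 2 ℝ (Fin (d + 1) → ℝ)).symm.toLinearMap
  have hbasis : (Set.range fun i => EuclideanSpace.single i (1 : ℝ)) =
      e '' Set.range fun i j => if i = j then 1 else 0 := by
    rw [← Set.range_comp]
    congr 1
    ext i j
    simp [e, eq_comm]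
  rw [stdSimplex', hbasis, ← e.image_convexHull, convexHull_basis_eq_stdSimplex]
  rfl

lemma dual_vorCellA_eq (d : ℕ) :
    {y : EuclideanSpace ℝ (Fin (d + 1)) | (∑ i, y i = 0) ∧ ∀ x ∈ vorCellA d, ⟪x, y⟫ ≤ 1} =
      WithLp.toLp 2 '' {w | ∑ i, w i = 0 ∧ ∑ i, (w i)⁺ ≤ 1} := by
  rw [WithLp.image_toLp_eq_preimage_ofLp, ← dual_voronoiA_eq]
  ext y
  simp only [vorCellA_eq, Set.mem_preimage, Set.mem_ofPred_eq, EuclideanSpace.real_inner_eq_sum]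
  exact and_congr_right fun _ => ⟨fun h x hx => h (WithLp.toLp 2 x) hx, fun h x hx => h _ hx⟩

lemma add_neg_stdSimplex'_eq (d : ℕ) :
    stdSimplex' d + -stdSimplex' d =
      WithLp.toLp 2 '' {w | ∑ i, w i = 0 ∧ ∑ i, (w i)⁺ ≤ 1} := by
  rw [← sub_eq_add_neg, stdSimplex'_eq, ← sub_stdSimplex_eq]
  exact (Set.image_sub (WithLp.linearEquiv 2 ℝ (Fin (d + 1) → ℝ)).symm).symm

section ExtensionComplexity

variable {E : Type*} [AddCommGroup E] [Module ℝ E]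

lemma xc_image_le_card {κ : Type*} [Fintype κ] {n : ℕ} (A : κ → Fin n → ℝ) (b : κ → ℝ)
    (π : (Fin n → ℝ) →ₗ[ℝ] E)
    (hbdd : Bornology.IsBounded {x : Fin n → ℝ | ∀ k, ∑ j, A k j * x j ≤ b k}) :
    xc (π '' {x | ∀ k, ∑ j, A k j * x j ≤ b k}) ≤ Fintype.card κ := by
  let e := Fintype.equivFin κ
  have hreindex : {x : Fin n → ℝ | ∀ i, ∑ j, A (e.symm i) j * x j ≤ b (e.symm i)} =
      {x | ∀ k, ∑ j, A k j * x j ≤ b k} := by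
    ext x
    exact (e.symm.surjective.forall (p := fun k => ∑ j, A k j * x j ≤ b k)).symm
  exact Nat.sInf_le ⟨n, fun i => A (e.symm i), fun i => b (e.symm i), π, hreindex ▸ hbdd,
    hreindex ▸ rfl⟩

lemma xc_image_Icc_le {n : ℕ} (π : (Fin n → ℝ) →ₗ[ℝ] E) : xc (π '' Set.Icc 0 1) ≤ 2 * n := by
  let A : Fin n ⊕ Fin n → Fin n → ℝ := Sum.elim (fun i => Pi.single i 1) (fun i => -Pi.single i 1)
  let b : Fin n ⊕ Fin n → ℝ := Sum.elim 1 0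
  have hIcc : {x : Fin n → ℝ | ∀ k, ∑ j, A k j * x j ≤ b k} = Set.Icc 0 1 := by
    ext x
    simp [A, b, Pi.single_apply, Pi.le_def, and_comm]
  have := xc_image_le_card A b π (hIcc ▸ Metric.isBounded_Icc 0 1)
  rw [hIcc, Fintype.card_sum, Fintype.card_fin] at this
  omega

end ExtensionComplexity

lemma xc_vorCellA_le (d : ℕ) : xc (vorCellA d) ≤ 2 * (d + 1) := by
  have : vorCellA d =
      ((WithLp.linearEquiv 2 ℝ (Fin (d + 1) → ℝ)).symm.toLinearMap ∘ₗ centering) '' Set.Icc 0 1 := by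
    rw [LinearMap.coe_comp, Set.image_comp, image_centering_Icc, vorCellA_eq,
      ← WithLp.image_toLp_eq_preimage_ofLp]
    rfl
  rw [this]
  exact xc_image_Icc_le _

/-- The dual polytope of the Voronoi cell of the root lattice `A_d`, taken within
the hyperplane `{x : Σ x_i = 0}`, equals `S + (−S)` where `S` is the standard
simplex; consequently `xc(VC(A_d)) ≤ 2(d+1)`. -/
theorem dual_voronoi_A_eq_diff_of_simplices (d : ℕ) :
    {y : EuclideanSpace ℝ (Fin (d + 1)) |
        (∑ i, y i = 0) ∧ ∀ x ∈ vorCellA d, ⟪x, y⟫ ≤ 1} =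
      stdSimplex' d + -stdSimplex' d ∧
    xc (vorCellA d) ≤ 2 * (d + 1) :=
  ⟨by rw [dual_vorCellA_eq, add_neg_stdSimplex'_eq], xc_vorCellA_le d⟩
end

section
/- Every totally unimodular d × r matrix whose columns are pairwise distinct, nonzero, and no column is the negative of another, satisfies r ≤ d(d+1)/2. -/
/-!
Induct on `d`, deleting the first row, and group the columns by their lower parts `Fin.tail` up
to sign. Within a group, two columns cannot both start with `±1` (a `2 × 2` minor would be `±2`)
nor both with `0` (they would be parallel), and at most one column is `±e₀`. Discarding `±e₀` and
the `±1`-led column of every group of two leaves, below the first row, a totally unimodular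
matrix with `d - 1` rows and pairwise non-parallel columns. There are at most `d - 1` groups of
two, because the lower parts of their `0`-led columns are linearly independent: a circuit among
them has cofactor coefficients `±1` by total unimodularity, and swapping two of its columns for
their partners gives a square submatrix of determinant `±2`. Hence
`r ≤ (d - 1) d / 2 + (d - 1) + 1 = d (d + 1) / 2`.
-/

/-- A real matrix is totally unimodular if every square submatrix has determinant
in `{−1, 0, 1}`. -/
def TotallyUnimodular {d r : ℕ} (A : Matrix (Fin d) (Fin r) ℝ) : Prop :=
  ∀ (k : ℕ) (f : Fin k → Fin d) (g : Fin k → Fin r),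
    (A.submatrix f g).det = -1 ∨ (A.submatrix f g).det = 0 ∨ (A.submatrix f g).det = 1

open Matrix

theorem Matrix.exists_det_submatrix_ne_zero_of_linearIndependent {K m ι : Type*} [Field K]
    [Fintype m] [Fintype ι] [DecidableEq ι] (M : Matrix m ι K) (h : LinearIndependent K Mᵀ) :
    ∃ R : ι → m, (M.submatrix R id).det ≠ 0 := by
  obtain ⟨κ, a, ha, hspan, hind⟩ := exists_linearIndependent' K M.row
  have := Fintype.ofInjective a ha
  have hcard : Fintype.card κ = Fintype.card ι := by
    rw [← finrank_span_eq_card hind, hspan, ← rank_eq_finrank_span_row, ← rank_transpose]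
    exact h.rank_matrix
  let e := Fintype.equivOfCardEq hcard.symm
  refine ⟨a ∘ e, ((isUnit_iff_isUnit_det _).1 ?_).ne_zero⟩
  exact linearIndependent_rows_iff_isUnit.1 (hind.comp e e.injective)

section Circuit

variable {K V ι : Type*} [Ring K] [AddCommGroup V] [Module K V] [Fintype ι] {u : ι → V}

theorem exists_sum_smul_eq_zero_of_not_linearIndependent (h : ¬LinearIndependent K u) :
    ∃ (n : ℕ) (σ : Fin (n + 1) ↪ ι) (g : Fin (n + 1) → K),
      (∀ q, g q ≠ 0) ∧ ∑ q, g q • u (σ q) = 0 ∧ n < Fintype.card ι := by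
  classical
  obtain ⟨g, hsum, i, hi⟩ := Fintype.not_linearIndependent_iff.1 h
  set S := Finset.univ.filter fun j => g j ≠ 0
  obtain ⟨n, hn⟩ : ∃ n, S.card = n + 1 :=
    Nat.exists_eq_add_one_of_ne_zero (Finset.card_ne_zero.2 ⟨i, by simpa [S] using hi⟩)
  let e : Fin (n + 1) ≃ S := (S.equivFin.trans (finCongr hn)).symm
  let σ : Fin (n + 1) ↪ ι := e.toEmbedding.trans (Function.Embedding.subtype _)
  refine ⟨n, σ, fun q => g (σ q), fun q => (Finset.mem_filter.1 (e q).2).2, ?_, ?_⟩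
  · calc ∑ q, g (σ q) • u (σ q) = ∑ j : S, g j • u j := e.sum_comp fun j : S => g j • u j
      _ = ∑ j ∈ S, g j • u j := Finset.sum_coe_sort S fun j => g j • u j
      _ = 0 := by rw [Finset.sum_filter_of_ne fun j _ hj => left_ne_zero_of_smul hj, hsum]
  · have := S.card_le_univ
    omega

theorem exists_circuit_of_not_linearIndependent (h : ¬LinearIndependent K u) :
    ∃ (n : ℕ) (σ : Fin (n + 1) ↪ ι) (g : Fin (n + 1) → K), (∀ q, g q ≠ 0) ∧
      ∑ q, g q • u (σ q) = 0 ∧ LinearIndependent K fun p : Fin n => u (σ p.succ) := by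
  classical
  have hex : ∃ n, ∃ (σ : Fin (n + 1) ↪ ι) (g : Fin (n + 1) → K),
      (∀ q, g q ≠ 0) ∧ ∑ q, g q • u (σ q) = 0 := by
    obtain ⟨n, σ, g, hg, hsum, -⟩ := exists_sum_smul_eq_zero_of_not_linearIndependent h
    exact ⟨n, σ, g, hg, hsum⟩
  obtain ⟨σ, g, hg, hsum⟩ := Nat.find_spec hex
  refine ⟨_, σ, g, hg, hsum, by_contra fun hdep => ?_⟩
  obtain ⟨k, τ, g', hg', hsum', hk⟩ := exists_sum_smul_eq_zero_of_not_linearIndependent hdep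
  rw [Fintype.card_fin] at hk
  exact Nat.find_min hex hk ⟨(τ.trans (Fin.succEmb _)).trans σ, g', hg', hsum'⟩

end Circuit

namespace Matrix

variable {R : Type*} [CommRing R] {n : ℕ}

/-- The cofactors of an extra top row of an `n × (n + 1)` matrix, see `Matrix.det_of_vecCons`;
for `n = 2`, the cross product of the two rows. -/
def cofactorVec (V : Matrix (Fin n) (Fin (n + 1)) R) : Fin (n + 1) → R :=
  fun q => (-1) ^ (q : ℕ) * (V.submatrix id q.succAbove).det

theorem det_of_vecCons (t : Fin (n + 1) → R) (V : Matrix (Fin n) (Fin (n + 1)) R) :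
    (of (vecCons t V)).det = t ⬝ᵥ V.cofactorVec := by
  rw [det_succ_row_zero]
  refine Finset.sum_congr rfl fun q _ => ?_
  change (-1) ^ (q : ℕ) * t q * (V.submatrix id q.succAbove).det = _
  simp only [cofactorVec]
  ring

theorem mulVec_cofactorVec (V : Matrix (Fin n) (Fin (n + 1)) R) : V *ᵥ V.cofactorVec = 0 := by
  ext i
  rw [Pi.zero_apply, mulVec, ← det_of_vecCons]
  exact det_zero_of_row_eq (i := 0) (j := i.succ) (Fin.succ_ne_zero i).symm rfl

theorem cofactorVec_zero (V : Matrix (Fin n) (Fin (n + 1)) R) :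
    V.cofactorVec 0 = (V.submatrix id Fin.succ).det := by
  simp [cofactorVec]

theorem smul_cofactorVec_eq_of_mulVec_eq_zero [IsDomain R] {V : Matrix (Fin n) (Fin (n + 1)) R}
    (hV : V.cofactorVec 0 ≠ 0) {g : Fin (n + 1) → R} (hg : V *ᵥ g = 0) :
    g 0 • V.cofactorVec = V.cofactorVec 0 • g := by
  set h := g 0 • V.cofactorVec - V.cofactorVec 0 • g
  have hker : V *ᵥ h = 0 := by
    simp [h, mulVec_sub, mulVec_smul, mulVec_cofactorVec, hg]
  have h0 : h 0 = 0 := by simp [h, mul_comm]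
  have htail : Fin.tail h = 0 := by
    refine eq_zero_of_mulVec_eq_zero (cofactorVec_zero V ▸ hV) ?_
    rw [← hker]
    ext i
    simp [mulVec, dotProduct, Fin.sum_univ_succ, h0, Fin.tail]
  rw [← sub_eq_zero]
  funext q
  exact Fin.cases h0 (congrFun htail) q

end Matrix

def EqUpToSign {V : Type*} [Neg V] (x y : V) : Prop := x = y ∨ x = -y

section

variable {V : Type*}

theorem EqUpToSign.symm [InvolutiveNeg V] {x y : V} (h : EqUpToSign x y) : EqUpToSign y x :=
  h.imp Eq.symm fun h => by rw [h, neg_neg]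

theorem EqUpToSign.trans [InvolutiveNeg V] {x y z : V} (hxy : EqUpToSign x y)
    (hyz : EqUpToSign y z) : EqUpToSign x z := by
  rcases hxy with rfl | rfl <;> rcases hyz with rfl | rfl <;> simp [EqUpToSign]

theorem eqUpToSign_iff_exists_smul {R : Type*} [Ring R] [AddCommGroup V] [Module R V] {x y : V} :
    EqUpToSign x y ↔ ∃ ζ : R, (ζ = 1 ∨ ζ = -1) ∧ x = ζ • y := by
  constructor
  · rintro (rfl | rfl)
    exacts [⟨1, Or.inl rfl, (one_smul R x).symm⟩, ⟨-1, Or.inr rfl, (neg_one_smul R y).symm⟩]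
  · rintro ⟨ζ, rfl | rfl, rfl⟩
    exacts [Or.inl (one_smul R y), Or.inr (neg_one_smul R y)]

theorem EqUpToSign.of_tail [AddGroup V] {n : ℕ} {x y : Fin (n + 1) → V} (hx : x 0 = 0)
    (hy : y 0 = 0) (h : EqUpToSign (Fin.tail x) (Fin.tail y)) : EqUpToSign x y := by
  rw [← Fin.cons_self_tail x, ← Fin.cons_self_tail y, hx, hy]
  rcases h with h | h
  · exact Or.inl (by rw [h])
  · exact Or.inr (by rw [h]; ext i; refine Fin.cases ?_ (fun _ => rfl) i; simp)

theorem apply_zero_ne_zero_or_tail_ne_zero [Zero V] {n : ℕ} {x : Fin (n + 1) → V} (hx : x ≠ 0) :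
    x 0 ≠ 0 ∨ Fin.tail x ≠ 0 :=
  cons_nonzero_iff.1 ((Fin.cons_self_tail x).symm ▸ hx)

end

def HasZeroLedPartner {m r : ℕ} (A : Matrix (Fin (m + 1)) (Fin r) ℝ) (s : Finset (Fin r))
    (j : Fin r) : Prop :=
  A 0 j ≠ 0 ∧ ∃ z ∈ s, A 0 z = 0 ∧ EqUpToSign (Fin.tail (Aᵀ z)) (Fin.tail (Aᵀ j))

namespace TotallyUnimodular

section Basic

variable {d r : ℕ} {A : Matrix (Fin d) (Fin r) ℝ}

theorem apply_eq_neg_one_or (hA : TotallyUnimodular A) (i : Fin d) (j : Fin r) :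
    A i j = -1 ∨ A i j = 0 ∨ A i j = 1 := by
  simpa [det_fin_one] using hA 1 (fun _ => i) (fun _ => j)

theorem apply_eq_one_or_of_ne_zero (hA : TotallyUnimodular A) {i : Fin d} {j : Fin r}
    (h : A i j ≠ 0) : A i j = 1 ∨ A i j = -1 := by
  rcases hA.apply_eq_neg_one_or i j with h' | h' | h'
  exacts [Or.inr h', absurd h' h, Or.inl h']

theorem submatrix (hA : TotallyUnimodular A) {d' r' : ℕ} (f : Fin d' → Fin d)
    (g : Fin r' → Fin r) : TotallyUnimodular (A.submatrix f g) :=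
  fun k f' g' => hA k (f ∘ f') (g ∘ g')

theorem abs_det_submatrix_le_one (hA : TotallyUnimodular A) {k : ℕ} (f : Fin k → Fin d)
    (g : Fin k → Fin r) : |(A.submatrix f g).det| ≤ 1 := by
  rcases hA k f g with h | h | h <;> simp [h]

theorem cofactorVec_submatrix_eq_neg_one_or (hA : TotallyUnimodular A) {n : ℕ}
    (f : Fin n → Fin d) (g : Fin (n + 1) → Fin r) (q : Fin (n + 1)) :
    (A.submatrix f g).cofactorVec q = -1 ∨ (A.submatrix f g).cofactorVec q = 0 ∨
      (A.submatrix f g).cofactorVec q = 1 := by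
  rcases neg_one_pow_eq_or ℝ (q : ℕ) with hq | hq <;>
    rcases hA n f (g ∘ q.succAbove) with h | h | h <;>
    simp [cofactorVec, hq, h, submatrix_submatrix]

theorem exists_signed_circuit (hA : TotallyUnimodular A) {ι : Type*} [Fintype ι] (a : ι → Fin r)
    (h : ¬LinearIndependent ℝ fun t => Aᵀ (a t)) :
    ∃ (n : ℕ) (σ : Fin (n + 1) ↪ ι) (R : Fin n → Fin d),
      (∀ q, (A.submatrix R (a ∘ σ)).cofactorVec q = 1 ∨
        (A.submatrix R (a ∘ σ)).cofactorVec q = -1) ∧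
      ∑ q, (A.submatrix R (a ∘ σ)).cofactorVec q • Aᵀ (a (σ q)) = 0 := by
  obtain ⟨n, σ, g, hg, hsum, hind⟩ := exists_circuit_of_not_linearIndependent h
  obtain ⟨R, hR⟩ := (A.submatrix id fun p : Fin n => a (σ p.succ))
    |>.exists_det_submatrix_ne_zero_of_linearIndependent hind
  set V := A.submatrix R (a ∘ σ)
  have hc0 : V.cofactorVec 0 ≠ 0 := by rw [cofactorVec_zero]; exact hR
  have hVg : V *ᵥ g = 0 := by
    ext i
    simpa [V, mulVec, dotProduct, mul_comm] using congrFun hsum (R i)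
  have hgc (q : Fin (n + 1)) : g 0 * V.cofactorVec q = V.cofactorVec 0 * g q := by
    simpa using congrFun (smul_cofactorVec_eq_of_mulVec_eq_zero hc0 hVg) q
  refine ⟨n, σ, R, fun q => ?_, ?_⟩
  · have hcq : V.cofactorVec q ≠ 0 := fun h0 => by simpa [h0, hc0, hg q] using hgc q
    rcases hA.cofactorVec_submatrix_eq_neg_one_or R (a ∘ σ) q with h | h | h
    exacts [Or.inr h, absurd h hcq, Or.inl h]
  · refine (smul_eq_zero.1 ?_).resolve_left (hg 0)
    calc g 0 • ∑ q, V.cofactorVec q • Aᵀ (a (σ q))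
        = V.cofactorVec 0 • ∑ q, g q • Aᵀ (a (σ q)) := by
          simp only [Finset.smul_sum, smul_smul, hgc]
      _ = 0 := by rw [hsum, smul_zero]

end Basic

section RowZero

variable {m r : ℕ} {A : Matrix (Fin (m + 1)) (Fin r) ℝ}

theorem apply_zero_eq_mul_or_tail_eq_zero (hA : TotallyUnimodular A) {j j' : Fin r}
    (hj : A 0 j ≠ 0) (hj' : A 0 j' ≠ 0) {ζ : ℝ} (hζ : ζ = 1 ∨ ζ = -1)
    (h : ∀ i : Fin m, A i.succ j = ζ * A i.succ j') :
    A 0 j = ζ * A 0 j' ∨ ∀ i : Fin m, A i.succ j' = 0 := by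
  by_contra! ⟨h0, i, hi⟩
  -- The minor on rows `0, i + 1` is `(A 0 j - ζ * A 0 j') * A (i + 1) j' = ±2`.
  have hminor := hA 2 ![0, i.succ] ![j, j']
  rw [det_fin_two] at hminor
  simp only [submatrix_apply, cons_val_zero, cons_val_one, h i] at hminor
  rcases hA.apply_eq_one_or_of_ne_zero hj with hx | hx <;>
    rcases hA.apply_eq_one_or_of_ne_zero hj' with hy | hy <;>
    rcases hA.apply_eq_one_or_of_ne_zero hi with hw | hw <;>
    rcases hζ with rfl | rfl <;> revert h0 hminor <;> norm_num [hx, hy, hw]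

theorem eqUpToSign_col_of_eqUpToSign_tail (hA : TotallyUnimodular A) {j j' : Fin r}
    (hj : A 0 j ≠ 0) (hj' : A 0 j' ≠ 0) (h : EqUpToSign (Fin.tail (Aᵀ j)) (Fin.tail (Aᵀ j'))) :
    EqUpToSign (Aᵀ j) (Aᵀ j') := by
  obtain ⟨ζ, hζ, h⟩ := eqUpToSign_iff_exists_smul (R := ℝ) |>.1 h
  have h' (i : Fin m) : A i.succ j = ζ * A i.succ j' := congrFun h i
  rcases hA.apply_zero_eq_mul_or_tail_eq_zero hj hj' hζ h' with h0 | h0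
  · exact eqUpToSign_iff_exists_smul.2 ⟨ζ, hζ, funext fun i => Fin.cases h0 h' i⟩
  · have hsq : A 0 j' * A 0 j' = 1 := mul_self_eq_one_iff.2 (hA.apply_eq_one_or_of_ne_zero hj')
    refine eqUpToSign_iff_exists_smul.2 ⟨A 0 j * A 0 j', ?_, funext fun i => Fin.cases ?_ ?_ i⟩
    · rcases hA.apply_eq_one_or_of_ne_zero hj with hx | hx <;>
        rcases hA.apply_eq_one_or_of_ne_zero hj' with hy | hy <;> simp [hx, hy]
    · simp [mul_assoc, hsq]
    · simp [h', h0]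

theorem abs_cofactor_pair_sum_le_one (hA : TotallyUnimodular A) {n : ℕ} (R : Fin n → Fin m)
    (a b : Fin (n + 1) → Fin r) (ha : ∀ q, A 0 (a q) = 0) {ζ : Fin (n + 1) → ℝ}
    (hζ : ∀ q, ζ q = 1 ∨ ζ q = -1) (hab : ∀ q, Fin.tail (Aᵀ (b q)) = ζ q • Fin.tail (Aᵀ (a q)))
    {q₁ q₂ : Fin (n + 1)} (hne : q₁ ≠ q₂) :
    |ζ q₁ * A 0 (b q₁) * (A.submatrix (fun i => (R i).succ) a).cofactorVec q₁ +
      ζ q₂ * A 0 (b q₂) * (A.submatrix (fun i => (R i).succ) a).cofactorVec q₂| ≤ 1 := by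
  set V := A.submatrix (fun i => (R i).succ) a
  -- `W` has `b q₁, b q₂` in place of `a q₁, a q₂`; rescaled by `ζ`, those columns agree with
  -- `a q₁, a q₂` below row `0`.
  let t : Fin (n + 1) → ℝ := fun q => if q = q₁ ∨ q = q₂ then ζ q * A 0 (b q) else 0
  let ε : Fin (n + 1) → ℝ := fun q => if q = q₁ ∨ q = q₂ then ζ q else 1
  let W := A.submatrix (Fin.cons 0 fun i => (R i).succ : Fin (n + 1) → Fin (m + 1))
    fun q => if q = q₁ ∨ q = q₂ then b q else a q
  have hW : W * diagonal ε = of (vecCons t V) := by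
    ext i q
    rw [mul_diagonal]
    refine Fin.cases ?_ (fun i => ?_) i
    · change A 0 (if q = q₁ ∨ q = q₂ then b q else a q) * ε q = t q
      simp only [ε, t]
      split_ifs
      · ring
      · simp [ha]
    · change A (R i).succ (if q = q₁ ∨ q = q₂ then b q else a q) * ε q = A (R i).succ (a q)
      have hbq : A (R i).succ (b q) = ζ q * A (R i).succ (a q) := congrFun (hab q) (R i)
      have hsq : ζ q * ζ q = 1 := mul_self_eq_one_iff.2 (hζ q)
      simp only [ε]
      split_ifs
      · rw [hbq]
        linear_combination A (R i).succ (a q) * hsq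
      · ring
  have hε : |∏ q, ε q| = 1 := by
    rw [Finset.abs_prod]
    refine Finset.prod_eq_one fun q _ => ?_
    rcases hζ q with h | h <;> simp only [ε] <;> split_ifs <;> simp [h]
  have hsum : t ⬝ᵥ V.cofactorVec =
      ζ q₁ * A 0 (b q₁) * V.cofactorVec q₁ + ζ q₂ * A 0 (b q₂) * V.cofactorVec q₂ := by
    refine (Fintype.sum_eq_add q₁ q₂ hne fun q hq => by simp [t, hq.1, hq.2]).trans ?_
    simp [t]
  rw [← hsum, ← det_of_vecCons, ← hW, det_mul, det_diagonal, abs_mul, hε, mul_one]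
  exact hA.abs_det_submatrix_le_one _ _

theorem le_one_of_cofactorVec_eq_one_or (hA : TotallyUnimodular A) {n : ℕ} (R : Fin n → Fin m)
    (a b : Fin (n + 1) → Fin r) (ha : ∀ q, A 0 (a q) = 0) (hb : ∀ q, A 0 (b q) ≠ 0)
    (hab : ∀ q, EqUpToSign (Fin.tail (Aᵀ (b q))) (Fin.tail (Aᵀ (a q))))
    (hc : ∀ q, (A.submatrix (fun i => (R i).succ) a).cofactorVec q = 1 ∨
      (A.submatrix (fun i => (R i).succ) a).cofactorVec q = -1) :
    n ≤ 1 := by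
  by_contra! hn
  choose ζ hζ hbζ using fun q => eqUpToSign_iff_exists_smul (R := ℝ) |>.1 (hab q)
  set φ : Fin (n + 1) → ℝ :=
    fun q => ζ q * A 0 (b q) * (A.submatrix (fun i => (R i).succ) a).cofactorVec q
  have hφ (q : Fin (n + 1)) : φ q ∈ ({1, -1} : Finset ℝ) := by
    rcases hζ q with h1 | h1 <;> rcases hA.apply_eq_one_or_of_ne_zero (hb q) with h2 | h2 <;>
      rcases hc q with h3 | h3 <;> simp [φ, h1, h2, h3]
  obtain ⟨q₁, -, q₂, -, hne, hφeq⟩ := Finset.exists_ne_map_eq_of_card_lt_of_maps_to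
    (s := Finset.univ) (t := {1, -1})
    (by rw [Finset.card_pair (by norm_num), Finset.card_univ, Fintype.card_fin]; omega)
    (fun q _ => hφ q)
  have hle : |φ q₁ + φ q₂| ≤ 1 := hA.abs_cofactor_pair_sum_le_one R a b ha hζ hbζ hne
  have h₁ := hφ q₁
  simp only [Finset.mem_insert, Finset.mem_singleton] at h₁
  rcases h₁ with h | h <;> rw [← hφeq, h] at hle <;> norm_num at hle

theorem linearIndependent_tail_of_partner (hA : TotallyUnimodular A) {ι : Type*} [Fintype ι]
    (a b : ι → Fin r) (ha : ∀ t, A 0 (a t) = 0) (hb : ∀ t, A 0 (b t) ≠ 0)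
    (hab : ∀ t, EqUpToSign (Fin.tail (Aᵀ (b t))) (Fin.tail (Aᵀ (a t))))
    (hnz : ∀ t, Fin.tail (Aᵀ (a t)) ≠ 0)
    (hpair : Pairwise fun t t' => ¬EqUpToSign (Fin.tail (Aᵀ (a t))) (Fin.tail (Aᵀ (a t')))) :
    LinearIndependent ℝ fun t => Fin.tail (Aᵀ (a t)) := by
  by_contra h
  obtain ⟨n, σ, R, hc, hsum⟩ := (hA.submatrix Fin.succ id).exists_signed_circuit a h
  have hn : n ≤ 1 := hA.le_one_of_cofactorVec_eq_one_or R (a ∘ σ) (b ∘ σ)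
    (fun _ => ha _) (fun _ => hb _) (fun _ => hab _) hc
  set c := ((A.submatrix Fin.succ id).submatrix R (a ∘ σ)).cofactorVec
  have hsq (q) : c q * c q = 1 := mul_self_eq_one_iff.2 (hc q)
  interval_cases n
  · rw [Fin.sum_univ_one] at hsum
    exact hnz (σ 0) ((smul_eq_zero.1 hsum).resolve_left (by rcases hc 0 with h | h <;> simp [h]))
  · refine hpair (σ.injective.ne zero_ne_one)
      (eqUpToSign_iff_exists_smul.2 ⟨-(c 0 * c 1), ?_, ?_⟩)
    · rcases hc 0 with h0 | h0 <;> rcases hc 1 with h1 | h1 <;> simp [h0, h1]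
    · rw [Fin.sum_univ_two] at hsum
      change c 0 • Fin.tail (Aᵀ (a (σ 0))) + c 1 • Fin.tail (Aᵀ (a (σ 1))) = 0 at hsum
      linear_combination (norm := module) c 0 • hsum - hsq 0 • Fin.tail (Aᵀ (a (σ 0)))

theorem card_le_of_forall_hasZeroLedPartner (hA : TotallyUnimodular A) {s : Finset (Fin r)}
    (hnz : ∀ j ∈ s, Aᵀ j ≠ 0)
    (hs : (s : Set (Fin r)).Pairwise fun j j' => ¬EqUpToSign (Aᵀ j) (Aᵀ j')) (D : Finset (Fin r))
    (hD : ∀ j ∈ D, j ∈ s ∧ HasZeroLedPartner A s j) :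
    D.card ≤ m := by
  choose p hps hp0 hpj using fun j : D => (hD j j.2).2.2
  have hD (j : D) := hD j j.2
  have hpair : Pairwise fun j j' : D =>
      ¬EqUpToSign (Fin.tail (Aᵀ (p j))) (Fin.tail (Aᵀ (p j'))) := by
    intro j j' hne h
    by_cases hp : p j = p j'
    · refine hs (hD j).1 (hD j').1 (Subtype.coe_injective.ne hne)
        (hA.eqUpToSign_col_of_eqUpToSign_tail (hD j).2.1 (hD j').2.1 ?_)
      exact (hpj j).symm.trans (hp ▸ hpj j')
    · exact hs (hps j) (hps j') hp (h.of_tail (hp0 j) (hp0 j'))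
  have hind := hA.linearIndependent_tail_of_partner p Subtype.val hp0 (fun j => (hD j).2.1)
    (fun j => (hpj j).symm)
    (fun j => (apply_zero_ne_zero_or_tail_ne_zero (hnz _ (hps j))).resolve_left (not_not.2 (hp0 j)))
    hpair
  simpa using hind.fintype_card_le_finrank

theorem not_eqUpToSign_tail_of_not_hasZeroLedPartner (hA : TotallyUnimodular A)
    {s : Finset (Fin r)} (hs : (s : Set (Fin r)).Pairwise fun j j' => ¬EqUpToSign (Aᵀ j) (Aᵀ j'))
    {j j' : Fin r} (hj : j ∈ s) (hj' : j' ∈ s) (hne : j ≠ j') (hpj : ¬HasZeroLedPartner A s j)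
    (hpj' : ¬HasZeroLedPartner A s j') :
    ¬EqUpToSign (Fin.tail (Aᵀ j)) (Fin.tail (Aᵀ j')) := by
  intro h
  by_cases h0 : A 0 j = 0 <;> by_cases h0' : A 0 j' = 0
  · exact hs hj hj' hne (h.of_tail h0 h0')
  · exact hpj' ⟨h0', j, hj, h0, h⟩
  · exact hpj ⟨h0, j', hj', h0', h.symm⟩
  · exact hs hj hj' hne (hA.eqUpToSign_col_of_eqUpToSign_tail h0 h0' h)

theorem card_filter_tail_eq_zero_le_one (hA : TotallyUnimodular A) {s : Finset (Fin r)}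
    (hnz : ∀ j ∈ s, Aᵀ j ≠ 0)
    (hs : (s : Set (Fin r)).Pairwise fun j j' => ¬EqUpToSign (Aᵀ j) (Aᵀ j'))
    [DecidablePred fun j => Fin.tail (Aᵀ j) = 0] :
    (s.filter fun j => Fin.tail (Aᵀ j) = 0).card ≤ 1 := by
  refine Finset.card_le_one.2 fun j hj j' hj' => by_contra fun hne => ?_
  rw [Finset.mem_filter] at hj hj'
  have htop {k} (hk : k ∈ s) (ht : Fin.tail (Aᵀ k) = 0) : A 0 k ≠ 0 :=
    (apply_zero_ne_zero_or_tail_ne_zero (hnz k hk)).resolve_right (not_not.2 ht)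
  exact hs hj.1 hj'.1 hne (hA.eqUpToSign_col_of_eqUpToSign_tail (htop hj.1 hj.2)
    (htop hj'.1 hj'.2) (Or.inl (hj.2.trans hj'.2.symm)))

end RowZero

theorem card_le_of_pairwise_not_eqUpToSign {d r : ℕ} {A : Matrix (Fin d) (Fin r) ℝ}
    (hA : TotallyUnimodular A) (s : Finset (Fin r)) (hnz : ∀ j ∈ s, Aᵀ j ≠ 0)
    (hs : (s : Set (Fin r)).Pairwise fun j j' => ¬EqUpToSign (Aᵀ j) (Aᵀ j')) :
    s.card ≤ d * (d + 1) / 2 := by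
  induction d generalizing s with
  | zero =>
    rw [Finset.card_eq_zero.2 (Finset.eq_empty_of_forall_notMem fun j hj =>
      hnz j hj (Subsingleton.elim _ _))]
  | succ m ih =>
    classical
    let s₁ := s.filter fun j => Fin.tail (Aᵀ j) ≠ 0 ∧ ¬HasZeroLedPartner A s j
    let s₂ := s.filter fun j => Fin.tail (Aᵀ j) = 0
    let s₃ := s.filter fun j => HasZeroLedPartner A s j
    have h₁ : s₁.card ≤ m * (m + 1) / 2 := by
      refine ih (hA.submatrix Fin.succ id) s₁ (fun j hj => (Finset.mem_filter.1 hj).2.1)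
        fun j hj j' hj' hne => ?_
      rw [Finset.coe_filter] at hj hj'
      exact hA.not_eqUpToSign_tail_of_not_hasZeroLedPartner hs hj.1 hj'.1 hne hj.2.2 hj'.2.2
    have h₂ : s₂.card ≤ 1 := hA.card_filter_tail_eq_zero_le_one hnz hs
    have h₃ : s₃.card ≤ m :=
      hA.card_le_of_forall_hasZeroLedPartner hnz hs s₃ fun j hj => Finset.mem_filter.1 hj
    have hsub : s ⊆ s₁ ∪ s₂ ∪ s₃ := fun j hj => by
      simp only [s₁, s₂, s₃, Finset.mem_union, Finset.mem_filter]
      tauto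
    have hcount : m * (m + 1) / 2 + 1 + m = (m + 1) * (m + 1 + 1) / 2 := by
      rw [show (m + 1) * (m + 1 + 1) = m * (m + 1) + (m + 1) * 2 by ring,
        Nat.add_mul_div_right _ _ two_pos]
      ring
    calc s.card ≤ s₁.card + s₂.card + s₃.card :=
          (Finset.card_le_card hsub).trans
            ((Finset.card_union_le _ _).trans (add_le_add_left (Finset.card_union_le _ _) _))
      _ ≤ (m + 1) * (m + 1 + 1) / 2 := by omega

end TotallyUnimodular

/-- Korkine–Zolotarev/Heller bound: a totally unimodular `d × r` matrix whose
columns are nonzero, pairwise distinct, and pairwise non-opposite has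
`r ≤ d(d+1)/2` columns. -/
theorem tu_column_bound (d r : ℕ) (A : Matrix (Fin d) (Fin r) ℝ)
    (hTU : TotallyUnimodular A)
    (hnz : ∀ j, (fun i => A i j) ≠ 0)
    (hdist : ∀ j j', j ≠ j' → (fun i => A i j) ≠ (fun i => A i j'))
    (hopp : ∀ j j', j ≠ j' → (fun i => A i j) ≠ -(fun i => A i j')) :
    r ≤ d * (d + 1) / 2 := by
  simpa using hTU.card_le_of_pairwise_not_eqUpToSign Finset.univ (fun j _ => hnz j)
    fun j _ j' _ hne => not_or.2 ⟨hdist j j' hne, hopp j j' hne⟩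
end

section
/- Let H ⊆ ℝ^k be an affine subspace with direction space L and base point h, and suppose all points of X := {0,1}^k ∩ H have common norm α > 0. Define the lattice Λ := {(z′,z″) ∈ ℤ^k × αℤ : z′ + (z″/α)h ∈ L, ⟨𝟏, z′⟩ + α z″ = 0} and the point p := (0, −α) ∈ ℝ^{k+1}. Then the set of lattice points of Λ closest to p is exactly {0} ∪ {(x, −α) : x ∈ X}. -/
/-!
Write a lattice point as `w = (x, α m)` with `x` integral and `m ∈ ℤ`. The constraint
`∑ xᵢ = -α² m` turns `‖p - w‖² = ‖x‖² + α² (m + 1)²` into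
`α² + (∑ xᵢ² - ∑ xᵢ) + α² m (m + 1)`, and both brackets are nonnegative for integers, vanishing
exactly when `x` is a `0/1`-vector and `m ∈ {0, -1}`. For `m = 0` the constraint forces `x = 0`;
for `m = -1` the condition `x + m h ∈ L` reads `x - h ∈ L`, i.e. `x ∈ X`.
-/

lemma Int.mul_add_one_nonneg (m : ℤ) : 0 ≤ m * (m + 1) := by
  nlinarith [Int.le_self_sq (-m)]

lemma le_sq_of_eq_intCast {y : ℝ} (hy : ∃ n : ℤ, y = n) : y ≤ y ^ 2 := by
  obtain ⟨n, rfl⟩ := hy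
  exact_mod_cast Int.le_self_sq n

lemma Finset.forall_eq_zero_or_one_of_sum_eq_sum_sq {ι : Type*} {s : Finset ι} {y : ι → ℝ}
    (hy : ∀ i ∈ s, ∃ n : ℤ, y i = n) (h : ∑ i ∈ s, y i = ∑ i ∈ s, y i ^ 2) :
    ∀ i ∈ s, y i = 0 ∨ y i = 1 := fun i hi =>
  eq_zero_or_one_of_sq_eq_self
    ((Finset.sum_eq_sum_iff_of_le fun i hi => le_sq_of_eq_intCast (hy i hi)).1 h i hi).symm

lemma Finset.sum_eq_sum_sq_of_forall_eq_zero_or_one {ι : Type*} {s : Finset ι} {y : ι → ℝ}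
    (hy : ∀ i ∈ s, y i = 0 ∨ y i = 1) : ∑ i ∈ s, y i = ∑ i ∈ s, y i ^ 2 :=
  Finset.sum_congr rfl fun i hi => by rcases hy i hi with h | h <;> simp [h]

lemma sep_forall_le_eq_sep_eq {α β : Type*} [PartialOrder β] {s : Set α} {f : α → β} {b : β}
    (hb : ∃ a ∈ s, f a = b) (hle : ∀ a ∈ s, b ≤ f a) :
    {a ∈ s | ∀ a' ∈ s, f a ≤ f a'} = {a ∈ s | f a = b} := by
  obtain ⟨a₀, ha₀, rfl⟩ := hb
  ext a
  refine ⟨fun ⟨ha, hmin⟩ => ⟨ha, le_antisymm (hmin a₀ ha₀) (hle a ha)⟩, ?_⟩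
  rintro ⟨ha, hfa⟩
  exact ⟨ha, fun a' ha' => hfa ▸ hle a' ha'⟩

namespace EuclideanSpace

variable {k : ℕ} {x y : EuclideanSpace ℝ (Fin k)} {s t : ℝ}

def snoc (x : EuclideanSpace ℝ (Fin k)) (t : ℝ) : EuclideanSpace ℝ (Fin (k + 1)) :=
  WithLp.toLp 2 fun j => if hj : j = Fin.last k then t else x (j.castPred hj)

@[simp]
lemma snoc_castSucc (i : Fin k) : snoc x t i.castSucc = x i := by
  simp [snoc, (Fin.castSucc_lt_last i).ne]

@[simp]
lemma snoc_last : snoc x t (Fin.last k) = t := by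
  simp [snoc]

lemma exists_eq_snoc (w : EuclideanSpace ℝ (Fin (k + 1))) : ∃ x t, w = snoc x t :=
  ⟨WithLp.toLp 2 fun i => w i.castSucc, w (Fin.last k), by
    ext j; cases j using Fin.lastCases <;> simp⟩

@[simp]
lemma snoc_zero_zero : snoc (0 : EuclideanSpace ℝ (Fin k)) 0 = 0 := by
  ext j; cases j using Fin.lastCases <;> simp

lemma snoc_sub_snoc : snoc x t - snoc y s = snoc (x - y) (t - s) := by
  ext j; cases j using Fin.lastCases <;> simp

lemma norm_snoc_sq : ‖snoc x t‖ ^ 2 = ‖x‖ ^ 2 + t ^ 2 := by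
  simp [real_norm_sq_eq, Fin.sum_univ_castSucc]

end EuclideanSpace

section KannanLattice

open EuclideanSpace

variable {k : ℕ} {L : Submodule ℝ (EuclideanSpace ℝ (Fin k))} {h x : EuclideanSpace ℝ (Fin k)}
  {α : ℝ}

def kannanLattice (L : Submodule ℝ (EuclideanSpace ℝ (Fin k))) (h : EuclideanSpace ℝ (Fin k))
    (α : ℝ) : Set (EuclideanSpace ℝ (Fin (k + 1))) :=
  {z | (∀ i : Fin k, ∃ m : ℤ, z (Fin.castSucc i) = (m : ℝ)) ∧
    (∃ m : ℤ, z (Fin.last k) = α * (m : ℝ)) ∧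
    (WithLp.toLp 2 (fun i => z (Fin.castSucc i) + (z (Fin.last k) / α) * h i) :
        EuclideanSpace ℝ (Fin k)) ∈ L ∧
    (∑ i : Fin k, z (Fin.castSucc i)) + α * z (Fin.last k) = 0}

lemma snoc_mem_kannanLattice_iff (hα : α ≠ 0) (m : ℤ) :
    snoc x (α * m) ∈ kannanLattice L h α ↔
      (∀ i, ∃ n : ℤ, x i = n) ∧ x + (m : ℝ) • h ∈ L ∧ ∑ i, x i + α ^ 2 * m = 0 := by
  have hdiv : α * m / α = m := by field_simp
  simp only [kannanLattice, Set.mem_ofPred_eq, snoc_castSucc, snoc_last, hdiv]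
  exact ⟨fun ⟨hx, _, hL, hs⟩ => ⟨hx, hL, by linear_combination hs⟩,
    fun ⟨hx, hL, hs⟩ => ⟨hx, ⟨m, rfl⟩, hL, by linear_combination hs⟩⟩

lemma exists_eq_snoc_of_mem_kannanLattice {w : EuclideanSpace ℝ (Fin (k + 1))}
    (hw : w ∈ kannanLattice L h α) : ∃ x, ∃ m : ℤ, w = snoc x (α * m) := by
  obtain ⟨x, t, rfl⟩ := exists_eq_snoc w
  obtain ⟨m, hm⟩ := hw.2.1
  exact ⟨x, m, by rw [← hm, snoc_last]⟩

lemma norm_snoc_neg_sub_snoc_sq (x : EuclideanSpace ℝ (Fin k)) (t : ℝ) :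
    ‖snoc 0 (-α) - snoc x t‖ ^ 2 = ‖x‖ ^ 2 + (α + t) ^ 2 := by
  rw [snoc_sub_snoc, norm_snoc_sq, zero_sub, norm_neg]
  ring

lemma norm_snoc_neg_sub_sq_of_mem_kannanLattice (hα : α ≠ 0) {m : ℤ}
    (hw : snoc x (α * m) ∈ kannanLattice L h α) :
    ‖snoc 0 (-α) - snoc x (α * m)‖ ^ 2 =
      α ^ 2 + ((∑ i, x i ^ 2 - ∑ i, x i) + α ^ 2 * (m * (m + 1))) := by
  have hsum := ((snoc_mem_kannanLattice_iff hα m).1 hw).2.2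
  rw [norm_snoc_neg_sub_snoc_sq, real_norm_sq_eq]
  linear_combination hsum

lemma sq_le_norm_snoc_neg_sub_sq (hα : α ≠ 0) {w : EuclideanSpace ℝ (Fin (k + 1))}
    (hw : w ∈ kannanLattice L h α) : α ^ 2 ≤ ‖snoc 0 (-α) - w‖ ^ 2 := by
  obtain ⟨x, m, rfl⟩ := exists_eq_snoc_of_mem_kannanLattice hw
  have hint := ((snoc_mem_kannanLattice_iff hα m).1 hw).1
  have hx : ∑ i, x i ≤ ∑ i, x i ^ 2 := Finset.sum_le_sum fun i _ => le_sq_of_eq_intCast (hint i)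
  have hm : (0 : ℝ) ≤ m * (m + 1) := by exact_mod_cast Int.mul_add_one_nonneg m
  rw [norm_snoc_neg_sub_sq_of_mem_kannanLattice hα hw]
  nlinarith [sq_nonneg α]

lemma eq_zero_or_eq_snoc_of_norm_snoc_neg_sub_sq_eq (hα : α ≠ 0)
    {w : EuclideanSpace ℝ (Fin (k + 1))} (hw : w ∈ kannanLattice L h α)
    (hd : ‖snoc 0 (-α) - w‖ ^ 2 = α ^ 2) :
    w = 0 ∨ ∃ x, ((∀ i, x i = 0 ∨ x i = 1) ∧ x - h ∈ L) ∧ w = snoc x (-α) := by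
  obtain ⟨x, m, rfl⟩ := exists_eq_snoc_of_mem_kannanLattice hw
  obtain ⟨hint, hL, hsum⟩ := (snoc_mem_kannanLattice_iff hα m).1 hw
  have hx : ∑ i, x i ≤ ∑ i, x i ^ 2 := Finset.sum_le_sum fun i _ => le_sq_of_eq_intCast (hint i)
  have hm : (0 : ℝ) ≤ m * (m + 1) := by exact_mod_cast Int.mul_add_one_nonneg m
  rw [norm_snoc_neg_sub_sq_of_mem_kannanLattice hα hw, add_eq_left] at hd
  obtain ⟨hx_eq, hm_eq⟩ :=
    (add_eq_zero_iff_of_nonneg (sub_nonneg.2 hx) (mul_nonneg (sq_nonneg α) hm)).1 hd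
  have hbin : ∀ i, x i = 0 ∨ x i = 1 := fun i =>
    Finset.forall_eq_zero_or_one_of_sum_eq_sum_sq (fun i _ => hint i)
      (sub_eq_zero.1 hx_eq).symm i (Finset.mem_univ i)
  rcases mul_eq_zero.1 ((mul_eq_zero.1 hm_eq).resolve_left (pow_ne_zero 2 hα)) with hm0 | hm_add
  · left
    have hx0 : x = 0 := by
      ext i
      refine (Finset.sum_eq_zero_iff_of_nonneg fun i _ => ?_).1 ?_ i (Finset.mem_univ i)
      · rcases hbin i with hi | hi <;> simp [hi]
      · simpa [hm0] using hsum
    simp [hx0, hm0]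
  · right
    have hm1 : (m : ℝ) = -1 := by linear_combination hm_add
    exact ⟨x, ⟨hbin, by simpa [hm1, ← sub_eq_add_neg] using hL⟩, by simp [hm1]⟩

lemma zero_mem_kannanLattice (hα : α ≠ 0) : 0 ∈ kannanLattice L h α := by
  rw [← snoc_zero_zero, show (0 : ℝ) = α * ((0 : ℤ) : ℝ) by simp, snoc_mem_kannanLattice_iff hα]
  exact ⟨fun _ => ⟨0, by simp⟩, by simp, by simp⟩

lemma snoc_neg_mem_kannanLattice (hα : α ≠ 0) (hbin : ∀ i, x i = 0 ∨ x i = 1) (hL : x - h ∈ L)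
    (hx : ‖x‖ = α) : snoc x (-α) ∈ kannanLattice L h α := by
  rw [show -α = α * ((-1 : ℤ) : ℝ) by simp, snoc_mem_kannanLattice_iff hα]
  refine ⟨fun i => (hbin i).elim (fun hi => ⟨0, by simp [hi]⟩) (fun hi => ⟨1, by simp [hi]⟩),
    by simpa [← sub_eq_add_neg] using hL, ?_⟩
  rw [Finset.sum_eq_sum_sq_of_forall_eq_zero_or_one fun i _ => hbin i, ← real_norm_sq_eq, hx]
  ring

end KannanLattice

/-- Kannan-style lattice construction: let `H = h + L ⊆ ℝ^k` be an affine subspace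
such that all points of `X = {0,1}^k ∩ H` have common norm `α > 0`.  For the lattice
`Λ = {(z′,z″) ∈ ℤ^k × αℤ : z′ + (z″/α)h ∈ L, ⟨𝟏,z′⟩ + αz″ = 0} ⊆ ℝ^{k+1}` and the
point `p = (0,−α)`, the lattice points of `Λ` closest to `p` are exactly
`{0} ∪ {(x,−α) : x ∈ X}`. -/
theorem closest_points_of_kannan_lattice (k : ℕ)
    (L : Submodule ℝ (EuclideanSpace ℝ (Fin k))) (h : EuclideanSpace ℝ (Fin k))
    (α : ℝ) (hα : 0 < α)
    (X : Set (EuclideanSpace ℝ (Fin k)))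
    (hX : X = {x | (∀ i, x i = 0 ∨ x i = 1) ∧ x - h ∈ L})
    (hnorm : ∀ x ∈ X, ‖x‖ = α)
    (Λ : Set (EuclideanSpace ℝ (Fin (k + 1))))
    (hΛ : Λ = {z | (∀ i : Fin k, ∃ m : ℤ, z (Fin.castSucc i) = (m : ℝ)) ∧
      (∃ m : ℤ, z (Fin.last k) = α * (m : ℝ)) ∧
      (WithLp.toLp 2 (fun i => z (Fin.castSucc i) + (z (Fin.last k) / α) * h i) :
          EuclideanSpace ℝ (Fin k)) ∈ L ∧
      (∑ i : Fin k, z (Fin.castSucc i)) + α * z (Fin.last k) = 0})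
    (p : EuclideanSpace ℝ (Fin (k + 1)))
    (hp : p = fun j => if j = Fin.last k then -α else 0) :
    {z ∈ Λ | ∀ w ∈ Λ, ‖p - z‖ ≤ ‖p - w‖} =
      {0} ∪ {z : EuclideanSpace ℝ (Fin (k + 1)) | ∃ x ∈ X,
        z = fun j => if hj : j = Fin.last k then -α else x (j.castPred hj)} := by
  obtain rfl : Λ = kannanLattice L h α := hΛ
  obtain rfl : p = EuclideanSpace.snoc 0 (-α) := by
    ext j; cases j using Fin.lastCases <;> simp [hp]
  subst hX
  simp_rw [← sq_le_sq₀ (norm_nonneg _) (norm_nonneg _)]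
  rw [sep_forall_le_eq_sep_eq ⟨0, zero_mem_kannanLattice hα.ne', by simp [EuclideanSpace.norm_snoc_sq]⟩
    fun w hw => sq_le_norm_snoc_neg_sub_sq hα.ne' hw]
  ext w
  constructor
  · rintro ⟨hw, hd⟩
    obtain rfl | ⟨x, hx, rfl⟩ := eq_zero_or_eq_snoc_of_norm_snoc_neg_sub_sq_eq hα.ne' hw hd
    exacts [Or.inl rfl, Or.inr ⟨x, hx, rfl⟩]
  · rintro (rfl | ⟨x, ⟨hbin, hL⟩, hw⟩)
    · exact ⟨zero_mem_kannanLattice hα.ne', by simp [EuclideanSpace.norm_snoc_sq]⟩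
    · obtain rfl : w = EuclideanSpace.snoc x (-α) := WithLp.ofLp_injective 2 hw
      refine ⟨snoc_neg_mem_kannanLattice hα.ne' hbin hL (hnorm x ⟨hbin, hL⟩), ?_⟩
      rw [norm_snoc_neg_sub_snoc_sq, hnorm x ⟨hbin, hL⟩]
      ring
end
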